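/- If x is a farthest point of y in C with respect to D_f, then for every c ∈ C, ⟨∇f(y) − ∇f(x), c − x⟩ ≥ 0. -/

import Mathlib

/-!
Subtracting the Bregman distances `D_f(x, y)` and `D_f(c, y)` cancels `f y`, so maximality of `x`
reads `f c - f x ≤ ⟪∇f(y), c - x⟫`; the gradient inequality of the convex `f` at `x` gives
`⟪∇f(x), c - x⟫ ≤ f c - f x`.
-/

open scoped RealInnerProductSpace

/-- Bregman distance for real-valued `f` with gradient `f'`. -/
noncomputable abbrev bregman {J : ℕ}
    (f : EuclideanSpace ℝ (Fin J) → ℝ) (f' : EuclideanSpace ℝ (Fin J) → EuclideanSpace ℝ (Fin J))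
    (x y : EuclideanSpace ℝ (Fin J)) : ℝ :=
  f x - f y - ⟪f' y, x - y⟫

theorem ConvexOn.le_sub_of_hasFDerivAt {E : Type*} [NormedAddCommGroup E] [NormedSpace ℝ E]
    {s : Set E} {f : E → ℝ} {f' : E →L[ℝ] ℝ} {x y : E}
    (hf : ConvexOn ℝ s f) (hx : x ∈ s) (hy : y ∈ s) (hfx : HasFDerivAt f f' x) :
    f' (y - x) ≤ f y - f x := by
  let g : ℝ →ᵃ[ℝ] E := AffineMap.lineMap x y
  have hg0 : g 0 = x := AffineMap.lineMap_apply_zero x y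
  have hg1 : g 1 = y := AffineMap.lineMap_apply_one x y
  have hconv : ConvexOn ℝ (g ⁻¹' s) (f ∘ g) := hf.comp_affineMap g
  have hderiv : HasDerivAt (f ∘ g) (f' (y - x)) 0 :=
    (hg0 ▸ hfx).comp_hasDerivAt 0 AffineMap.hasDerivAt_lineMap
  have hslope := hconv.le_slope_of_hasDerivAt (hg0 ▸ hx : g 0 ∈ s) (hg1 ▸ hy : g 1 ∈ s)
    zero_lt_one hderiv
  simpa [slope_def_field, hg0, hg1] using hslope

theorem ConvexOn.inner_le_sub_of_hasGradientAt {E : Type*} [NormedAddCommGroup E]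
    [InnerProductSpace ℝ E] [CompleteSpace E] {s : Set E} {f : E → ℝ} {g x y : E}
    (hf : ConvexOn ℝ s f) (hx : x ∈ s) (hy : y ∈ s) (hfx : HasGradientAt f g x) :
    ⟪g, y - x⟫ ≤ f y - f x :=
  hf.le_sub_of_hasFDerivAt hx hy hfx.hasFDerivAt

theorem bregman_sub_bregman {J : ℕ} (f : EuclideanSpace ℝ (Fin J) → ℝ)
    (f' : EuclideanSpace ℝ (Fin J) → EuclideanSpace ℝ (Fin J)) (c x y : EuclideanSpace ℝ (Fin J)) :
    bregman f f' c y - bregman f f' x y = f c - f x - ⟪f' y, c - x⟫ := by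
  simp only [bregman, inner_sub_right]
  ring

theorem farthest_point_inner_nonneg_general {J : ℕ}
    (f : EuclideanSpace ℝ (Fin J) → ℝ) (U : Set (EuclideanSpace ℝ (Fin J)))
    (hconv : ConvexOn ℝ U f)
    (f' : EuclideanSpace ℝ (Fin J) → EuclideanSpace ℝ (Fin J))
    (hf' : ∀ y ∈ U, HasGradientAt f (f' y) y)
    (C : Set (EuclideanSpace ℝ (Fin J)))
    (hCU : C ⊆ U)
    (y : EuclideanSpace ℝ (Fin J))
    (x : EuclideanSpace ℝ (Fin J)) (hx : x ∈ C)
    (hfar : ∀ c ∈ C, bregman f f' c y ≤ bregman f f' x y) :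
    ∀ c ∈ C, 0 ≤ ⟪f' y - f' x, c - x⟫ := by
  intro c hc
  have hgrad : ⟪f' x, c - x⟫ ≤ f c - f x :=
    hconv.inner_le_sub_of_hasGradientAt (hCU hx) (hCU hc) (hf' x (hCU hx))
  have hmax : f c - f x - ⟪f' y, c - x⟫ ≤ 0 := by
    rw [← bregman_sub_bregman]
    exact sub_nonpos.mpr (hfar c hc)
  rw [inner_sub_left]
  linarith

/-- If `x` is a farthest point of `y` in `C` w.r.t. `D_f`, then
`⟪∇f(y) - ∇f(x), c - x⟫ ≥ 0` for every `c ∈ C`. -/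
theorem farthest_point_inner_nonneg {J : ℕ}
    (f : EuclideanSpace ℝ (Fin J) → ℝ) (U : Set (EuclideanSpace ℝ (Fin J)))
    (hU : IsOpen U) (hUne : U.Nonempty)
    (hconv : ConvexOn ℝ U f)
    (f' : EuclideanSpace ℝ (Fin J) → EuclideanSpace ℝ (Fin J))
    (hf' : ∀ y ∈ U, HasGradientAt f (f' y) y)
    (C : Set (EuclideanSpace ℝ (Fin J))) (hCne : C.Nonempty)
    (hCcp : IsCompact C) (hCU : C ⊆ U)
    (y : EuclideanSpace ℝ (Fin J)) (hy : y ∈ U)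
    (x : EuclideanSpace ℝ (Fin J)) (hx : x ∈ C)
    (hfar : ∀ c ∈ C, bregman f f' c y ≤ bregman f f' x y) :
    ∀ c ∈ C, 0 ≤ ⟪f' y - f' x, c - x⟫ :=
  farthest_point_inner_nonneg_general f U hconv f' hf' C hCU y x hx hfar
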